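/- (Krawtchouk type: commutator relations for R, F, L.) Assume \theta_i = \theta^*_i = d - 2i for all i. Then [A^*, L] = 2L, [A^*, F] = 0, [A^*, R] = -2R, and consequently R = ([A^*,[A^*,A]] - 2[A^*,A])/8, F = A - [A^*,[A^*,A]]/4, L = ([A^*,[A^*,A]] + 2[A^*,A])/8. -/

import Mathlib

/-- A tridiagonal system `(A; {E_i}; A*; {E*_i})` of diameter `d` on `V`:
`A, A*` are diagonalizable with primitive idempotents `E_i`, `E*_i` (in standard
orderings, so that the tridiagonal conditions hold), mutually distinct eigenvalues
`θ_i`, `θ*_i`, and no nontrivial proper subspace of `V` is invariant under both. -/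
structure TDSystem (F V : Type*) [Field F] [AddCommGroup V] [Module F V] (d : ℕ) where
  A : Module.End F V
  As : Module.End F V
  E : ℕ → Module.End F V
  Es : ℕ → Module.End F V
  θ : ℕ → F
  θs : ℕ → F
  hEE : ∀ i ≤ d, ∀ j ≤ d, E i * E j = if i = j then E i else 0
  hEsEs : ∀ i ≤ d, ∀ j ≤ d, Es i * Es j = if i = j then Es i else 0
  hEsum : ∑ i ∈ Finset.range (d + 1), E i = 1
  hEssum : ∑ i ∈ Finset.range (d + 1), Es i = 1
  hEne : ∀ i ≤ d, E i ≠ 0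
  hEsne : ∀ i ≤ d, Es i ≠ 0
  hA : A = ∑ i ∈ Finset.range (d + 1), θ i • E i
  hAs : As = ∑ i ∈ Finset.range (d + 1), θs i • Es i
  hθ : ∀ i ≤ d, ∀ j ≤ d, i ≠ j → θ i ≠ θ j
  hθs : ∀ i ≤ d, ∀ j ≤ d, i ≠ j → θs i ≠ θs j
  htri : ∀ i ≤ d, ∀ j ≤ d, (i + 1 < j ∨ j + 1 < i) → Es i * A * Es j = 0
  htris : ∀ i ≤ d, ∀ j ≤ d, (i + 1 < j ∨ j + 1 < i) → E i * As * E j = 0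
  hirr : ∀ W : Submodule F V, (∀ v ∈ W, A v ∈ W) → (∀ v ∈ W, As v ∈ W) → W = ⊥ ∨ W = ⊤

/-! Conjugation by `A*` multiplies the block `E*_i A E*_j` by `θ*_i - θ*_j`, which is `-2`, `0`, `2`
on the raising, flat and lowering blocks when `θ*_i = d - 2i`. Since `A = R + F + L`, this gives
`[A*, A] = 2(L - R)` and `[A*, [A*, A]] = 4(L + R)`, which are solved for `R`, `L` and
`F = A - R - L`; this needs `2 ≠ 0`, which follows from `θ*_0 ≠ θ*_1`. -/

open Finset

section OrthogonalIdempotents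

variable {F M : Type*} [Field F] [Ring M] [Algebra F M] {e : ℕ → M} {d : ℕ}

theorem sum_smul_mul_of_orthogonal (he : ∀ i ≤ d, ∀ j ≤ d, e i * e j = if i = j then e i else 0)
    (θ : ℕ → F) {j : ℕ} (hj : j ≤ d) :
    (∑ i ∈ range (d + 1), θ i • e i) * e j = θ j • e j := by
  rw [sum_mul, sum_eq_single_of_mem j (mem_range.2 (by omega))]
  · rw [smul_mul_assoc, he j hj j hj, if_pos rfl]
  · intro i hi hij
    rw [smul_mul_assoc, he i (by grind) j hj, if_neg hij, smul_zero]

theorem mul_sum_smul_of_orthogonal (he : ∀ i ≤ d, ∀ j ≤ d, e i * e j = if i = j then e i else 0)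
    (θ : ℕ → F) {j : ℕ} (hj : j ≤ d) :
    e j * (∑ i ∈ range (d + 1), θ i • e i) = θ j • e j := by
  rw [mul_sum, sum_eq_single_of_mem j (mem_range.2 (by omega))]
  · rw [mul_smul_comm, he j hj j hj, if_pos rfl]
  · intro i hi hij
    rw [mul_smul_comm, he j hj i (by grind), if_neg (Ne.symm hij), smul_zero]

theorem commutator_sandwich_eq_sub_smul
    (he : ∀ i ≤ d, ∀ j ≤ d, e i * e j = if i = j then e i else 0) {θ : ℕ → F} {a : M}
    (ha : a = ∑ k ∈ range (d + 1), θ k • e k) (x : M) {i j : ℕ} (hi : i ≤ d) (hj : j ≤ d) :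
    a * (e i * x * e j) - e i * x * e j * a = (θ i - θ j) • (e i * x * e j) := by
  rw [← mul_assoc, ← mul_assoc, mul_assoc (e i * x), ha, sum_smul_mul_of_orthogonal he θ hi,
    mul_sum_smul_of_orthogonal he θ hj, smul_mul_assoc, smul_mul_assoc, mul_smul_comm, sub_smul]

theorem commutator_sum_sandwich_eq_smul
    (he : ∀ i ≤ d, ∀ j ≤ d, e i * e j = if i = j then e i else 0) {θ : ℕ → F} {a : M}
    (ha : a = ∑ k ∈ range (d + 1), θ k • e k) (x : M) {ι : Type*} (s : Finset ι) (p q : ι → ℕ)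
    {c : F} (hpq : ∀ k ∈ s, p k ≤ d ∧ q k ≤ d ∧ θ (p k) - θ (q k) = c) :
    a * (∑ k ∈ s, e (p k) * x * e (q k)) - (∑ k ∈ s, e (p k) * x * e (q k)) * a =
      c • ∑ k ∈ s, e (p k) * x * e (q k) := by
  rw [mul_sum, sum_mul, ← sum_sub_distrib, smul_sum]
  refine sum_congr rfl fun k hk => ?_
  obtain ⟨hp, hq, hc⟩ := hpq k hk
  rw [commutator_sandwich_eq_sub_smul he ha x hp hq, hc]

end OrthogonalIdempotents

theorem Finset.sum_range_sum_range_eq_of_tridiagonal {M : Type*} [AddCommMonoid M]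
    (g : ℕ → ℕ → M) (d : ℕ)
    (hg : ∀ i ≤ d, ∀ j ≤ d, (i + 1 < j ∨ j + 1 < i) → g i j = 0) :
    ∑ i ∈ range (d + 1), ∑ j ∈ range (d + 1), g i j =
      ∑ j ∈ range d, g (j + 1) j + ∑ j ∈ range (d + 1), g j j + ∑ j ∈ range d, g j (j + 1) := by
  induction d with
  | zero => simp
  | succ d ih =>
    have above : ∑ i ∈ range (d + 1), g i (d + 1) = g d (d + 1) := by
      rw [sum_range_succ, sum_eq_zero fun i hi => hg i (by grind) _ le_rfl (by grind), zero_add]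
    have left : ∑ j ∈ range (d + 1), g (d + 1) j = g (d + 1) d := by
      rw [sum_range_succ, sum_eq_zero fun j hj => hg _ le_rfl j (by grind) (by grind), zero_add]
    rw [sum_range_succ, sum_congr rfl fun i _ => sum_range_succ (g i) (d + 1), sum_add_distrib,
      ih fun i hi j hj => hg i (by omega) j (by omega), above, sum_range_succ (g (d + 1)), left,
      sum_range_succ (fun j => g (j + 1) j) d, sum_range_succ (fun j => g j j) (d + 1),
      sum_range_succ (fun j => g j (j + 1)) d]
    abel

theorem eq_raise_add_flat_add_lower {M : Type*} [Ring M] (e : ℕ → M) (d : ℕ)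
    (hsum : ∑ i ∈ range (d + 1), e i = 1) (x : M)
    (htri : ∀ i ≤ d, ∀ j ≤ d, (i + 1 < j ∨ j + 1 < i) → e i * x * e j = 0) :
    x = ∑ i ∈ range d, e (i + 1) * x * e i + ∑ i ∈ range (d + 1), e i * x * e i
      + ∑ i ∈ Icc 1 d, e (i - 1) * x * e i := by
  have lower : ∑ i ∈ Icc 1 d, e (i - 1) * x * e i = ∑ i ∈ range d, e i * x * e (i + 1) := by
    rw [← Ico_add_one_right_eq_Icc, sum_Ico_eq_sum_range]
    simp [add_comm 1]
  calc x = (∑ i ∈ range (d + 1), e i) * x * ∑ j ∈ range (d + 1), e j := by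
        rw [hsum, one_mul, mul_one]
    _ = ∑ i ∈ range (d + 1), ∑ j ∈ range (d + 1), e i * x * e j := by
        rw [sum_mul, sum_mul_sum]
    _ = _ := by
        rw [sum_range_sum_range_eq_of_tridiagonal _ d htri, lower]

theorem eq_of_commutator_eq_neg_two_zero_two {F M : Type*} [Field F] [Ring M] [Algebra F M]
    {a x r f l : M} (h2 : (2 : F) ≠ 0) (hx : x = r + f + l)
    (hr : a * r - r * a = (-2 : F) • r) (hf : a * f - f * a = 0)
    (hl : a * l - l * a = (2 : F) • l) :
    r = (8 : F)⁻¹ • ((a * (a * x - x * a) - (a * x - x * a) * a) - (2 : F) • (a * x - x * a)) ∧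
    f = x - (4 : F)⁻¹ • (a * (a * x - x * a) - (a * x - x * a) * a) ∧
    l = (8 : F)⁻¹ • ((a * (a * x - x * a) - (a * x - x * a) * a) + (2 : F) • (a * x - x * a)) := by
  have hc : a * x - x * a = (-2 : F) • r + (2 : F) • l := by
    calc a * x - x * a = (a * r - r * a) + (a * f - f * a) + (a * l - l * a) := by
          rw [hx]; noncomm_ring
      _ = _ := by rw [hr, hf, hl, add_zero]
  have h4 : (4 : F) ≠ 0 := by simpa [show (4 : F) = 2 ^ 2 by norm_num] using h2
  have h8 : (8 : F) ≠ 0 := by simpa [show (8 : F) = 2 ^ 3 by norm_num] using h2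
  have hcc : a * (a * x - x * a) - (a * x - x * a) * a = (4 : F) • r + (4 : F) • l := by
    rw [hc, mul_add, add_mul, mul_smul_comm, mul_smul_comm, smul_mul_assoc, smul_mul_assoc,
      eq_add_of_sub_eq' hr, eq_add_of_sub_eq' hl]
    module
  refine ⟨?_, ?_, ?_⟩
  · rw [hcc, hc]
    match_scalars <;> field_simp <;> ring
  · rw [hcc, hx]
    match_scalars <;> field_simp <;> ring
  · rw [hcc, hc]
    match_scalars <;> field_simp <;> ring

theorem stmt16_general {F V : Type*} [Field F] [AddCommGroup V] [Module F V]
    (d : ℕ) (hd : 1 ≤ d)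
    (Φ : TDSystem F V d)
    (hθs : ∀ i ≤ d, Φ.θs i = (d : F) - 2 * (i : F))
    (R Fm L : Module.End F V)
    (hR : R = ∑ i ∈ Finset.range d, Φ.Es (i + 1) * Φ.A * Φ.Es i)
    (hF : Fm = ∑ i ∈ Finset.range (d + 1), Φ.Es i * Φ.A * Φ.Es i)
    (hL : L = ∑ i ∈ Finset.Icc 1 d, Φ.Es (i - 1) * Φ.A * Φ.Es i) :
    Φ.As * L - L * Φ.As = (2 : F) • L ∧
    Φ.As * Fm - Fm * Φ.As = 0 ∧
    Φ.As * R - R * Φ.As = (-2 : F) • R ∧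
    R = (8 : F)⁻¹ •
      ((Φ.As * (Φ.As * Φ.A - Φ.A * Φ.As) - (Φ.As * Φ.A - Φ.A * Φ.As) * Φ.As)
        - (2 : F) • (Φ.As * Φ.A - Φ.A * Φ.As)) ∧
    Fm = Φ.A - (4 : F)⁻¹ •
      (Φ.As * (Φ.As * Φ.A - Φ.A * Φ.As) - (Φ.As * Φ.A - Φ.A * Φ.As) * Φ.As) ∧
    L = (8 : F)⁻¹ •
      ((Φ.As * (Φ.As * Φ.A - Φ.A * Φ.As) - (Φ.As * Φ.A - Φ.A * Φ.As) * Φ.As)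
        + (2 : F) • (Φ.As * Φ.A - Φ.A * Φ.As)) := by
  have h2 : (2 : F) ≠ 0 := by
    have h01 := Φ.hθs 0 d.zero_le 1 hd one_ne_zero.symm
    rw [hθs 0 d.zero_le, hθs 1 hd] at h01
    contrapose! h01
    simp [h01]
  have hcomm := commutator_sum_sandwich_eq_smul Φ.hEsEs Φ.hAs Φ.A (ι := ℕ)
  have hcR : Φ.As * R - R * Φ.As = (-2 : F) • R := by
    subst hR
    refine hcomm _ (· + 1) (fun i => i) fun i hi => ⟨by grind, by grind, ?_⟩
    rw [hθs _ (by grind), hθs _ (by grind)]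
    push_cast; ring
  have hcF : Φ.As * Fm - Fm * Φ.As = 0 := by
    rw [← zero_smul F Fm, hF]
    exact hcomm _ (fun i => i) (fun i => i) fun i hi => ⟨by grind, by grind, sub_self _⟩
  have hcL : Φ.As * L - L * Φ.As = (2 : F) • L := by
    subst hL
    refine hcomm _ (· - 1) (fun i => i) fun i hi => ⟨by grind, by grind, ?_⟩
    obtain ⟨h1, hid⟩ := mem_Icc.1 hi
    rw [hθs _ (by grind), hθs _ hid, Nat.cast_sub h1]
    push_cast; ring
  have hA : Φ.A = R + Fm + L := by
    rw [hR, hF, hL]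
    exact eq_raise_add_flat_add_lower Φ.Es d Φ.hEssum Φ.A Φ.htri
  exact ⟨hcL, hcF, hcR, eq_of_commutator_eq_neg_two_zero_two h2 hA hcR hcF hcL⟩

/-- For a tridiagonal system of Krawtchouk type
(`θ_i = θ*_i = d - 2i`), with `R, F, L` the raising/flat/lowering parts of `A`
relative to the `E*_i`, one has `[A*,L] = 2L`, `[A*,F] = 0`, `[A*,R] = -2R`, and
`R = ([A*,[A*,A]] - 2[A*,A])/8`, `F = A - [A*,[A*,A]]/4`,
`L = ([A*,[A*,A]] + 2[A*,A])/8`. -/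
theorem stmt16 {F V : Type*} [Field F] [AddCommGroup V] [Module F V]
    [FiniteDimensional F V] [Nontrivial V] (d : ℕ) (hd : 1 ≤ d)
    (Φ : TDSystem F V d)
    (hθ : ∀ i ≤ d, Φ.θ i = (d : F) - 2 * (i : F))
    (hθs : ∀ i ≤ d, Φ.θs i = (d : F) - 2 * (i : F))
    (R Fm L : Module.End F V)
    (hR : R = ∑ i ∈ Finset.range d, Φ.Es (i + 1) * Φ.A * Φ.Es i)
    (hF : Fm = ∑ i ∈ Finset.range (d + 1), Φ.Es i * Φ.A * Φ.Es i)
    (hL : L = ∑ i ∈ Finset.Icc 1 d, Φ.Es (i - 1) * Φ.A * Φ.Es i) :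
    Φ.As * L - L * Φ.As = (2 : F) • L ∧
    Φ.As * Fm - Fm * Φ.As = 0 ∧
    Φ.As * R - R * Φ.As = (-2 : F) • R ∧
    R = (8 : F)⁻¹ •
      ((Φ.As * (Φ.As * Φ.A - Φ.A * Φ.As) - (Φ.As * Φ.A - Φ.A * Φ.As) * Φ.As)
        - (2 : F) • (Φ.As * Φ.A - Φ.A * Φ.As)) ∧
    Fm = Φ.A - (4 : F)⁻¹ •
      (Φ.As * (Φ.As * Φ.A - Φ.A * Φ.As) - (Φ.As * Φ.A - Φ.A * Φ.As) * Φ.As) ∧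
    L = (8 : F)⁻¹ •
      ((Φ.As * (Φ.As * Φ.A - Φ.A * Φ.As) - (Φ.As * Φ.A - Φ.A * Φ.As) * Φ.As)
        + (2 : F) • (Φ.As * Φ.A - Φ.A * Φ.As)) :=
  stmt16_general d hd Φ hθs R Fm L hR hF hL
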